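/- Let a and z be real numbers, and define c : ℕ → ℝ by c(0) = −1 and c(d+1) = (1−a)·c(d) + z·∑_{j=0}^{d} C(d,j)·c(j). Then for every d ≥ 0, c(d) equals the negative of the d-th iterated derivative at 0 of the function f_{a,z}(x) = exp(−z − (a−1)x + z·e^x). -/

import Mathlib

/-!
The function `f(x) = exp(-z - (a-1)x + z eˣ)` solves `f' = (1 - a) f + z eˣ f` with `f(0) = 1`.
Differentiating this `d` times and expanding `(eˣ f)⁽ᵈ⁾` by Leibniz' rule shows that the Taylor
coefficients `f⁽ᵈ⁾(0)`, and hence their negatives, obey the same linear recursion as `c`, which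
determines a sequence from its initial value.
-/

open Real Finset
open scoped ContDiff

lemma iteratedDeriv_mul_exp {f : ℝ → ℝ} {n : ℕ} {x : ℝ} (hf : ContDiffAt ℝ n f x) :
    iteratedDeriv n (fun y => f y * exp y) x =
      (∑ j ∈ range (n + 1), n.choose j * iteratedDeriv j f x) * exp x := by
  rw [iteratedDeriv_fun_mul hf contDiff_exp.contDiffAt, sum_mul]
  simp [iteratedDeriv_eq_iterate, iter_deriv_exp]

lemma iteratedDeriv_succ_of_deriv_eq {f : ℝ → ℝ} {p z : ℝ} (hf : ContDiff ℝ ∞ f)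
    (hderiv : deriv f = fun x => p * f x + z * (f x * exp x)) (n : ℕ) (x : ℝ) :
    iteratedDeriv (n + 1) f x = p * iteratedDeriv n f x +
      z * (∑ j ∈ range (n + 1), n.choose j * iteratedDeriv j f x) * exp x := by
  have hfn : ContDiff ℝ n f := hf.of_le (by exact_mod_cast le_top)
  rw [iteratedDeriv_succ', hderiv, iteratedDeriv_fun_add (by fun_prop) (by fun_prop),
    iteratedDeriv_const_mul_field, iteratedDeriv_const_mul_field,
    iteratedDeriv_mul_exp hfn.contDiffAt, mul_assoc]

lemma eq_of_binomial_recursion {c u : ℕ → ℝ} {p z : ℝ} (h0 : c 0 = u 0)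
    (hc : ∀ d, c (d + 1) = p * c d + z * ∑ j ∈ range (d + 1), (d.choose j : ℝ) * c j)
    (hu : ∀ d, u (d + 1) = p * u d + z * ∑ j ∈ range (d + 1), (d.choose j : ℝ) * u j) :
    c = u := by
  funext d
  induction d using Nat.strong_induction_on with
  | _ d ih =>
    match d with
    | 0 => exact h0
    | d + 1 =>
      rw [hc, hu, ih d d.lt_succ_self]
      congr 2
      exact sum_congr rfl fun j hj => by rw [ih j (by simp at hj; omega)]

lemma deriv_exp_sub_mul_add_mul_exp (a z : ℝ) :
    deriv (fun x => exp (-z - (a - 1) * x + z * exp x)) =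
      fun x => (1 - a) * exp (-z - (a - 1) * x + z * exp x) +
        z * (exp (-z - (a - 1) * x + z * exp x) * exp x) := by
  funext x
  have hexponent : HasDerivAt (fun x => -z - (a - 1) * x + z * exp x)
      (0 - (a - 1) * 1 + z * exp x) x :=
    ((hasDerivAt_const x (-z)).sub ((hasDerivAt_id x).const_mul (a - 1))).add
      ((hasDerivAt_exp x).const_mul z)
  rw [hexponent.exp.deriv]
  ring

theorem stmt_5 (a z : ℝ) (c : ℕ → ℝ) (h0 : c 0 = -1)
    (hrec : ∀ d : ℕ, c (d + 1) =
      (1 - a) * c d + z * ∑ j ∈ Finset.range (d + 1), (Nat.choose d j : ℝ) * c j) :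
    ∀ d : ℕ, c d =
      -(iteratedDeriv d (fun x : ℝ => Real.exp (-z - (a - 1) * x + z * Real.exp x)) 0) := by
  set f : ℝ → ℝ := fun x => exp (-z - (a - 1) * x + z * exp x)
  have hf : ContDiff ℝ ∞ f := by fun_prop
  have hf_rec := iteratedDeriv_succ_of_deriv_eq hf (deriv_exp_sub_mul_add_mul_exp a z)
  refine congrFun (eq_of_binomial_recursion (u := fun d => -iteratedDeriv d f 0) ?_ hrec ?_)
  · simp [f, h0]
  · intro d
    simp only [hf_rec, exp_zero, mul_one, mul_neg, sum_neg_distrib]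
    ring
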